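/- Let φ₁, φ₂ : ℂ × ℂ → ℂ be functions that are analytic at the origin with φ₁(0,0) ≠ 0 and φ₂(0,0) ≠ 0, and let a, b, c, d be natural numbers with a·d ≠ b·c. Then there exist functions θ₁, θ₂ : ℂ × ℂ → ℂ, analytic at the origin, with θ₁(0,0) ≠ 0 and θ₂(0,0) ≠ 0, such that on some neighbourhood of the origin one has θ₁ᵃ · θ₂ᵇ = φ₁ and θ₁ᶜ · θ₂ᵈ = φ₂. -/
import Mathlib

lemma exists_analytic_log (φ : ℂ × ℂ → ℂ) (h : AnalyticAt ℂ φ 0) (hφ : φ 0 ≠ 0) :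
    ∃ ψ : ℂ × ℂ → ℂ, AnalyticAt ℂ ψ 0 ∧ ∀ᶠ p in nhds (0 : ℂ × ℂ),
      Complex.exp (ψ p) = φ p := by
  refine ⟨fun p => Complex.log (φ p / φ 0) + Complex.log (φ 0), ?_, ?_⟩
  · have hdiv : AnalyticAt ℂ (fun p => φ p / φ 0) 0 := h.div analyticAt_const hφ
    have h1 : (fun p => φ p / φ 0) 0 ∈ Complex.slitPlane := by
      simp only [div_self hφ]
      exact Complex.one_mem_slitPlane
    exact (hdiv.clog h1).add analyticAt_const
  · have hne : ∀ᶠ p in nhds (0 : ℂ × ℂ), φ p ≠ 0 :=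
      h.continuousAt.eventually_ne hφ
    filter_upwards [hne] with p hp
    rw [Complex.exp_add, Complex.exp_log (div_ne_zero hp hφ), Complex.exp_log hφ,
      div_mul_cancel₀ _ hφ]

/-- **Case (iii) of Lemma 2.2 (solvability of the unit system).** If
`φ₁, φ₂ : ℂ × ℂ → ℂ` are analytic at the origin with `φ₁(0) ≠ 0 ≠ φ₂(0)` and
`a·d ≠ b·c`, then there are functions `θ₁, θ₂`, analytic and nonvanishing at
the origin, with `θ₁^a · θ₂^b = φ₁` and `θ₁^c · θ₂^d = φ₂` near the origin. -/
theorem exists_analytic_units_solving_system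
    (φ₁ φ₂ : ℂ × ℂ → ℂ)
    (h₁ : AnalyticAt ℂ φ₁ 0) (h₂ : AnalyticAt ℂ φ₂ 0)
    (hφ₁ : φ₁ 0 ≠ 0) (hφ₂ : φ₂ 0 ≠ 0)
    (a b c d : ℕ) (habcd : a * d ≠ b * c) :
    ∃ θ₁ θ₂ : ℂ × ℂ → ℂ, AnalyticAt ℂ θ₁ 0 ∧ AnalyticAt ℂ θ₂ 0 ∧
      θ₁ 0 ≠ 0 ∧ θ₂ 0 ≠ 0 ∧
      ∀ᶠ p in nhds (0 : ℂ × ℂ),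
        θ₁ p ^ a * θ₂ p ^ b = φ₁ p ∧ θ₁ p ^ c * θ₂ p ^ d = φ₂ p := by
  obtain ⟨ψ₁, hψ₁, he₁⟩ := exists_analytic_log φ₁ h₁ hφ₁
  obtain ⟨ψ₂, hψ₂, he₂⟩ := exists_analytic_log φ₂ h₂ hφ₂
  set Δ : ℂ := (a : ℂ) * d - (b : ℂ) * c with hΔdef
  have hΔ : Δ ≠ 0 := by
    intro h
    apply habcd
    have h' : (a : ℂ) * d = (b : ℂ) * c := sub_eq_zero.mp h
    have : ((a * d : ℕ) : ℂ) = ((b * c : ℕ) : ℂ) := by push_cast; exact h'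
    exact_mod_cast this
  refine ⟨fun p => Complex.exp (((d : ℂ) * ψ₁ p - (b : ℂ) * ψ₂ p) / Δ),
         fun p => Complex.exp (((a : ℂ) * ψ₂ p - (c : ℂ) * ψ₁ p) / Δ), ?_, ?_, ?_, ?_, ?_⟩
  · exact (((analyticAt_const.mul hψ₁).sub (analyticAt_const.mul hψ₂)).div
      analyticAt_const hΔ).cexp
  · exact (((analyticAt_const.mul hψ₂).sub (analyticAt_const.mul hψ₁)).div
      analyticAt_const hΔ).cexp
  · exact Complex.exp_ne_zero _
  · exact Complex.exp_ne_zero _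
  · filter_upwards [he₁, he₂] with p hp₁ hp₂
    constructor
    · rw [← Complex.exp_nat_mul, ← Complex.exp_nat_mul, ← Complex.exp_add, ← hp₁]
      congr 1
      field_simp
      ring
    · rw [← Complex.exp_nat_mul, ← Complex.exp_nat_mul, ← Complex.exp_add, ← hp₂]
      congr 1
      field_simp
      ring
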